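/- arXiv:1010.1906 — 2 statements merged into one kernel-verified Lean document; each statement's English description precedes it below -/
import Mathlib

section
/- Let H be a complex Hilbert space, let S, A : H → H be bounded linear operators with S symmetric (⟨Sx, y⟩ = ⟨x, Sy⟩ for all x, y ∈ H) and A skew-symmetric (⟨Ax, y⟩ = −⟨x, Ay⟩ for all x, y ∈ H), and let T₀ < T₁ be real numbers. Then for every continuously differentiable function f : [T₀, T₁] → H one has ∫_{T₀}^{T₁} ( Re⟨(SA − AS)f(t), f(t)⟩ + ‖Sf(t)‖² ) dt ≤ ∫_{T₀}^{T₁} ‖f′(t) − Sf(t) − Af(t)‖² dt + |⟨Sf(T₁), f(T₁)⟩| + |⟨Sf(T₀), f(T₀)⟩|. -/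
/-!
Expanding the square with `x = f t`, `v = f' t` and using the symmetry of `S` and the
skew-symmetry of `A` gives the pointwise identity
`‖v - S x - A x‖² + 2 Re ⟪S x, v⟫ = ‖v - A x‖² + Re ⟪[S;A] x, x⟫ + ‖S x‖²`.
Dropping `‖v - A x‖² ≥ 0` and integrating, the extra term `2 Re ⟪S f, f'⟫` is the derivative of
`Re ⟪S f, f⟫`, so it integrates to boundary values, which are bounded by their absolute values.
-/

open scoped InnerProductSpace

section

open RCLike Set

variable {𝕜 E : Type*} [RCLike 𝕜] [NormedAddCommGroup E] [InnerProductSpace 𝕜 E]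

theorem re_inner_commutator_apply_self {S A : E →ₗ[𝕜] E} (hS : S.IsSymmetric)
    (hA : ∀ x y : E, ⟪A x, y⟫_𝕜 = -⟪x, A y⟫_𝕜) (x : E) :
    re ⟪S (A x) - A (S x), x⟫_𝕜 = 2 * re ⟪A x, S x⟫_𝕜 := by
  rw [inner_sub_left, map_sub, hS (A x) x, hA (S x) x, map_neg, inner_re_symm (S x)]
  ring

theorem norm_sub_sub_sq_add_two_re_inner (S A : E →ₗ[𝕜] E) (x v : E) :
    ‖v - S x - A x‖ ^ 2 + 2 * re ⟪S x, v⟫_𝕜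
      = ‖v - A x‖ ^ 2 + 2 * re ⟪A x, S x⟫_𝕜 + ‖S x‖ ^ 2 := by
  rw [sub_right_comm, norm_sub_sq (𝕜 := 𝕜), inner_sub_left, map_sub, inner_re_symm (S x)]
  ring

theorem re_inner_commutator_apply_self_add_norm_sq_le {S A : E →ₗ[𝕜] E} (hS : S.IsSymmetric)
    (hA : ∀ x y : E, ⟪A x, y⟫_𝕜 = -⟪x, A y⟫_𝕜) (x v : E) :
    re ⟪S (A x) - A (S x), x⟫_𝕜 + ‖S x‖ ^ 2 ≤ ‖v - S x - A x‖ ^ 2 + 2 * re ⟪S x, v⟫_𝕜 := by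
  rw [re_inner_commutator_apply_self hS hA, norm_sub_sub_sq_add_two_re_inner]
  nlinarith [sq_nonneg ‖v - A x‖]

variable [NormedSpace ℝ E] [IsScalarTower ℝ 𝕜 E]

theorem HasDerivWithinAt.re_inner_apply_self {S : E →L[𝕜] E} (hS : (S : E →ₗ[𝕜] E).IsSymmetric)
    {f : ℝ → E} {f' : E} {s : Set ℝ} {t : ℝ} (hf : HasDerivWithinAt f f' s t) :
    HasDerivWithinAt (fun u ↦ re ⟪S (f u), f u⟫_𝕜) (2 * re ⟪S (f t), f'⟫_𝕜) s t := by
  have hSf : HasDerivWithinAt (fun u ↦ S (f u)) (S f') s t :=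
    (S.restrictScalars ℝ).hasFDerivAt.comp_hasDerivWithinAt t hf
  refine (reCLM.hasFDerivAt.comp_hasDerivWithinAt t (hSf.inner 𝕜 hf)).congr_deriv ?_
  rw [reCLM_apply, map_add, hS.apply_clm f' (f t), inner_re_symm f']
  ring

section Interval

variable {S A : E →L[𝕜] E} {f f' : ℝ → E} {a b : ℝ}

theorem integral_two_re_inner_apply_deriv (hS : (S : E →ₗ[𝕜] E).IsSymmetric) (hab : a ≤ b)
    (hf : ∀ t ∈ Icc a b, HasDerivWithinAt f (f' t) (Icc a b) t)
    (hf' : ContinuousOn f' (Icc a b)) :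
    ∫ t in a..b, 2 * re ⟪S (f t), f' t⟫_𝕜 = re ⟪S (f b), f b⟫_𝕜 - re ⟪S (f a), f a⟫_𝕜 := by
  have hderiv t (ht : t ∈ Icc a b) := (hf t ht).re_inner_apply_self hS
  have hfc : ContinuousOn f (Icc a b) := fun t ht ↦ (hf t ht).continuousWithinAt
  refine intervalIntegral.integral_eq_sub_of_hasDeriv_right_of_le hab
    (fun t ht ↦ (hderiv t ht).continuousWithinAt) (fun t ht ↦ ?_)
    (ContinuousOn.intervalIntegrable_of_Icc hab (by fun_prop))
  exact ((hderiv t (Ioo_subset_Icc_self ht)).hasDerivAt (Icc_mem_nhds ht.1 ht.2)).hasDerivWithinAt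

theorem integral_re_inner_commutator_add_norm_sq_le (hS : (S : E →ₗ[𝕜] E).IsSymmetric)
    (hA : ∀ x y : E, ⟪A x, y⟫_𝕜 = -⟪x, A y⟫_𝕜) (hab : a ≤ b)
    (hf : ∀ t ∈ Icc a b, HasDerivWithinAt f (f' t) (Icc a b) t)
    (hf' : ContinuousOn f' (Icc a b)) :
    ∫ t in a..b, (re ⟪S (A (f t)) - A (S (f t)), f t⟫_𝕜 + ‖S (f t)‖ ^ 2)
      ≤ (∫ t in a..b, ‖f' t - S (f t) - A (f t)‖ ^ 2)
        + (re ⟪S (f b), f b⟫_𝕜 - re ⟪S (f a), f a⟫_𝕜) := by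
  have hfc : ContinuousOn f (Icc a b) := fun t ht ↦ (hf t ht).continuousWithinAt
  rw [← integral_two_re_inner_apply_deriv hS hab hf hf',
    ← intervalIntegral.integral_add (ContinuousOn.intervalIntegrable_of_Icc hab (by fun_prop))
      (ContinuousOn.intervalIntegrable_of_Icc hab (by fun_prop))]
  exact intervalIntegral.integral_mono_on hab
    (ContinuousOn.intervalIntegrable_of_Icc hab (by fun_prop))
    (ContinuousOn.intervalIntegrable_of_Icc hab (by fun_prop))
    fun t _ ↦ re_inner_commutator_apply_self_add_norm_sq_le (S := (S : E →ₗ[𝕜] E))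
      (A := (A : E →ₗ[𝕜] E)) hS hA (f t) (f' t)

end Interval

end

theorem statement13_general {H : Type*} [NormedAddCommGroup H] [InnerProductSpace ℂ H]
    (S A : H →L[ℂ] H)
    (hS : ∀ x y : H, ⟪S x, y⟫_ℂ = ⟪x, S y⟫_ℂ)
    (hA : ∀ x y : H, ⟪A x, y⟫_ℂ = -⟪x, A y⟫_ℂ)
    (T₀ T₁ : ℝ) (hT : T₀ < T₁) (f f' : ℝ → H)
    (hf : ∀ t ∈ Set.Icc T₀ T₁, HasDerivWithinAt f (f' t) (Set.Icc T₀ T₁) t)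
    (hf' : ContinuousOn f' (Set.Icc T₀ T₁)) :
    (∫ t in T₀..T₁, ((⟪S (A (f t)) - A (S (f t)), f t⟫_ℂ).re + ‖S (f t)‖^2))
      ≤ (∫ t in T₀..T₁, ‖f' t - S (f t) - A (f t)‖^2)
        + ‖⟪S (f T₁), f T₁⟫_ℂ‖ + ‖⟪S (f T₀), f T₀⟫_ℂ‖ := by
  have h := integral_re_inner_commutator_add_norm_sq_le (S := S) hS hA hT.le hf hf'
  simp only [RCLike.re_to_complex] at h
  linarith [Complex.re_le_norm ⟪S (f T₁), f T₁⟫_ℂ, neg_abs_le (⟪S (f T₀), f T₀⟫_ℂ).re,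
    Complex.abs_re_le_norm ⟪S (f T₀), f T₀⟫_ℂ]

theorem statement13 {H : Type*} [NormedAddCommGroup H] [InnerProductSpace ℂ H]
    [CompleteSpace H] (S A : H →L[ℂ] H)
    (hS : ∀ x y : H, ⟪S x, y⟫_ℂ = ⟪x, S y⟫_ℂ)
    (hA : ∀ x y : H, ⟪A x, y⟫_ℂ = -⟪x, A y⟫_ℂ)
    (T₀ T₁ : ℝ) (hT : T₀ < T₁) (f f' : ℝ → H)
    (hf : ∀ t ∈ Set.Icc T₀ T₁, HasDerivWithinAt f (f' t) (Set.Icc T₀ T₁) t)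
    (hf' : ContinuousOn f' (Set.Icc T₀ T₁)) :
    (∫ t in T₀..T₁, ((⟪S (A (f t)) - A (S (f t)), f t⟫_ℂ).re + ‖S (f t)‖^2))
      ≤ (∫ t in T₀..T₁, ‖f' t - S (f t) - A (f t)‖^2)
        + ‖⟪S (f T₁), f T₁⟫_ℂ‖ + ‖⟪S (f T₀), f T₀⟫_ℂ‖ :=
  statement13_general S A hS hA T₀ T₁ hT f f' hf hf'
end

section
/- For every p ∈ (1, 4/3] there exist β ∈ ℝ, M > 0 and a four times continuously differentiable function φ : [0,∞) → ℝ such that: φ(r) = r^p + β for all r ≥ 1; φ(0) = 0 and φ′(0) = 0; φ(r) > 0 and φ′(r) > 0 for all r > 0; φ″(r) > 0 for all r ≥ 0; and φ(r) ≤ M r^p for all r ≥ 0. -/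
/-!
On `[0, 1]` take `φ` to be the fourth-order Taylor polynomial of `r ^ p` at `r = 1` plus a multiple
of `(r - 1) ^ 5`, the multiple being the one that makes `φ' (0) = 0`; on `[1, ∞)` take `r ^ p`;
then subtract the value at `0`. The two pieces have the same derivatives up to order four at `1`,
so `φ` is `C⁴`. For `1 < p < 2` every term of `φ''` on `[0, 1]`, written in powers of `1 - r`,
is nonnegative and the constant term `p (p - 1)` is positive, so `φ'' > 0`; integrating twice from
`φ (0) = φ' (0) = 0` gives `φ, φ' > 0` and `φ (r) ≤ C r² ≤ C r ^ p` on `[0, 1]`.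
-/

open Set

noncomputable def taylorSum (c : ℕ → ℝ) (n : ℕ) (a x : ℝ) : ℝ :=
  ∑ j ∈ Finset.range n, c j * (x - a) ^ j / j.factorial

theorem taylorSum_self (c : ℕ → ℝ) (n : ℕ) (a : ℝ) : taylorSum c (n + 1) a a = c 0 := by
  simp [taylorSum, Finset.sum_range_succ']

theorem continuous_taylorSum (c : ℕ → ℝ) (n : ℕ) (a : ℝ) :
    Continuous (taylorSum c n a) := by
  unfold taylorSum; fun_prop

theorem hasDerivAt_taylorSum (c : ℕ → ℝ) (n : ℕ) (a x : ℝ) :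
    HasDerivAt (taylorSum c (n + 1) a) (taylorSum (fun j => c (j + 1)) n a x) x := by
  have hterm : ∀ j ∈ Finset.range n,
      HasDerivAt (fun y => c (j + 1) * (y - a) ^ (j + 1) / (j + 1).factorial)
        (c (j + 1) * (x - a) ^ j / j.factorial) x := by
    intro j _
    refine ((((hasDerivAt_id x).sub_const a).pow (j + 1)).const_mul (c (j + 1)) |>.div_const
      ((j + 1).factorial : ℝ)).congr_deriv ?_
    rw [Nat.factorial_succ]
    push_cast
    field_simp
    simp
  have hsum : taylorSum c (n + 1) a = fun y =>
      ∑ j ∈ Finset.range n, c (j + 1) * (y - a) ^ (j + 1) / (j + 1).factorial + c 0 := by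
    ext y
    simp [taylorSum, Finset.sum_range_succ']
  rw [hsum]
  exact (HasDerivAt.fun_sum hterm).add_const (c 0)

theorem hasDerivAt_ite_le {f g f' g' : ℝ → ℝ} {a : ℝ}
    (hf : ∀ x ≤ a, HasDerivAt f (f' x) x) (hg : ∀ x, a ≤ x → HasDerivAt g (g' x) x)
    (ha : f a = g a) (ha' : f' a = g' a) (x : ℝ) :
    HasDerivAt (fun y => if y ≤ a then f y else g y) (if x ≤ a then f' x else g' x) x := by
  rcases lt_trichotomy x a with hx | rfl | hx
  · rw [if_pos hx.le]
    refine (hf x hx.le).congr_of_eventuallyEq ?_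
    filter_upwards [Iio_mem_nhds hx] with y hy
    exact if_pos (le_of_lt hy)
  · rw [if_pos le_rfl]
    have hleft : HasDerivWithinAt (fun y => if y ≤ x then f y else g y) (f' x) (Iic x) x :=
      (hf x le_rfl).hasDerivWithinAt.congr (fun y hy => if_pos hy) (if_pos le_rfl)
    have hright : HasDerivWithinAt (fun y => if y ≤ x then f y else g y) (f' x) (Ici x) x := by
      rw [ha']
      refine (hg x le_rfl).hasDerivWithinAt.congr (fun y hy => ?_) (by simp [ha])
      rcases (mem_Ici.mp hy).eq_or_lt with rfl | hy
      · simp [ha]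
      · exact if_neg (not_le.mpr hy)
    simpa [Iic_union_Ici] using hleft.union hright
  · rw [if_neg (not_le.mpr hx)]
    refine (hg x hx.le).congr_of_eventuallyEq ?_
    filter_upwards [Ioi_mem_nhds hx] with y hy
    exact if_neg (not_le.mpr hy)

theorem contDiff_of_hasDerivAt_succ {𝕜 E : Type*} [NontriviallyNormedField 𝕜]
    [NormedAddCommGroup E] [NormedSpace 𝕜 E] {F : ℕ → 𝕜 → E} {n : ℕ}
    (hF : ∀ k < n, ∀ x, HasDerivAt (F k) (F (k + 1) x) x) (hn : Continuous (F n)) :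
    ContDiff 𝕜 n (F 0) := by
  induction n generalizing F with
  | zero => exact contDiff_zero.mpr hn
  | succ n ih =>
    have hderiv : deriv (F 0) = F 1 := funext fun x => (hF 0 n.succ_pos x).deriv
    rw [Nat.cast_succ, contDiff_succ_iff_deriv, hderiv]
    exact ⟨fun x => (hF 0 n.succ_pos x).differentiableAt, by simp,
      ih (F := fun k => F (k + 1)) (fun k hk => hF (k + 1) (by omega)) hn⟩

theorem lt_of_hasDerivAt_pos {f f' : ℝ → ℝ} {a x : ℝ} (hf : ∀ y, HasDerivAt f (f' y) y)
    (hf' : ∀ y, a < y → 0 < f' y) (hx : a < x) : f a < f x := by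
  refine strictMonoOn_of_hasDerivWithinAt_pos (convex_Ici a)
    (fun y _ => (hf y).continuousAt.continuousWithinAt)
    (fun y _ => (hf y).hasDerivWithinAt) (fun y hy => hf' y ?_) self_mem_Ici hx.le hx
  simpa using hy

theorem le_mul_sq_of_hasDerivAt {f f' f'' : ℝ → ℝ} {K b : ℝ}
    (hf : ∀ x, HasDerivAt f (f' x) x) (hf' : ∀ x, HasDerivAt f' (f'' x) x)
    (h0 : f 0 = 0) (h0' : f' 0 = 0) (hK : ∀ x ∈ Icc 0 b, f'' x ≤ K) :
    ∀ x ∈ Icc 0 b, f x ≤ K * x ^ 2 / 2 := by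
  have hslope_deriv : ∀ x, HasDerivAt (fun x => K * x - f' x) (K - f'' x) x := fun x => by
    simpa using ((hasDerivAt_id' x).const_mul K).fun_sub (hf' x)
  have hgap_deriv : ∀ x, HasDerivAt (fun x => K * x ^ 2 / 2 - f x) (K * x - f' x) x := fun x =>
    ((((hasDerivAt_pow 2 x).const_mul K).div_const 2).fun_sub (hf x)).congr_deriv (by ring)
  have hslope : MonotoneOn (fun x => K * x - f' x) (Icc 0 b) :=
    monotoneOn_of_hasDerivWithinAt_nonneg (convex_Icc 0 b)
      (fun x _ => (hslope_deriv x).continuousAt.continuousWithinAt)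
      (fun x _ => (hslope_deriv x).hasDerivWithinAt)
      (fun x hx => sub_nonneg.2 (hK x (interior_subset hx)))
  have hgap : MonotoneOn (fun x => K * x ^ 2 / 2 - f x) (Icc 0 b) := by
    refine monotoneOn_of_hasDerivWithinAt_nonneg (convex_Icc 0 b)
      (fun x _ => (hgap_deriv x).continuousAt.continuousWithinAt)
      (fun x _ => (hgap_deriv x).hasDerivWithinAt) (fun x hx => ?_)
    have hx' := interior_subset hx
    simpa [h0'] using hslope ⟨le_rfl, hx'.1.trans hx'.2⟩ hx' hx'.1
  intro x hx
  have := hgap ⟨le_rfl, hx.1.trans hx.2⟩ hx hx.1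
  simp only [h0] at this
  linarith

/-- The derivatives at `1` of the polynomial piece on `[0, 1]`. -/
noncomputable def carlemanJet (p : ℝ) (k : ℕ) : ℝ :=
  if k = 5 then 4 * p * (p - 2) * (p - 3) * (p - 4) else (descPochhammer ℝ k).eval p

noncomputable def carlemanWeightDeriv (p : ℝ) (k : ℕ) (x : ℝ) : ℝ :=
  if x ≤ 1 then taylorSum (fun j => carlemanJet p (j + k)) (6 - k) 1 x
  else (descPochhammer ℝ k).eval p * x ^ (p - k)

theorem hasDerivAt_descPochhammer_mul_rpow (p : ℝ) (k : ℕ) {x : ℝ} (hx : 0 < x) :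
    HasDerivAt (fun y => (descPochhammer ℝ k).eval p * y ^ (p - k))
      ((descPochhammer ℝ (k + 1)).eval p * x ^ (p - ↑(k + 1))) x := by
  refine ((Real.hasDerivAt_rpow_const (p := p - k) (Or.inl hx.ne')).const_mul _).congr_deriv ?_
  rw [descPochhammer_succ_eval]
  push_cast
  ring_nf

theorem taylorSum_carlemanJet_one (p : ℝ) {k : ℕ} (hk : k ≤ 4) :
    taylorSum (fun j => carlemanJet p (j + k)) (6 - k) 1 1 = (descPochhammer ℝ k).eval p := by
  obtain ⟨m, hm⟩ : ∃ m, 6 - k = m + 1 := ⟨5 - k, by omega⟩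
  rw [hm, taylorSum_self, zero_add, carlemanJet, if_neg (by omega)]

theorem carlemanWeightDeriv_of_one_le (p : ℝ) {k : ℕ} (hk : k ≤ 4) {x : ℝ} (hx : 1 ≤ x) :
    carlemanWeightDeriv p k x = (descPochhammer ℝ k).eval p * x ^ (p - k) := by
  rcases hx.eq_or_lt with rfl | hx
  · simp [carlemanWeightDeriv, taylorSum_carlemanJet_one p hk]
  · exact if_neg (not_le.mpr hx)

theorem carlemanWeightDeriv_zero_of_one_le (p : ℝ) {x : ℝ} (hx : 1 ≤ x) :
    carlemanWeightDeriv p 0 x = x ^ p := by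
  simp [carlemanWeightDeriv_of_one_le p zero_le_four hx]

theorem hasDerivAt_carlemanWeightDeriv (p : ℝ) {k : ℕ} (hk : k < 4) (x : ℝ) :
    HasDerivAt (carlemanWeightDeriv p k) (carlemanWeightDeriv p (k + 1) x) x := by
  have hpoly : ∀ y, HasDerivAt (taylorSum (fun j => carlemanJet p (j + k)) (6 - k) 1)
      (taylorSum (fun j => carlemanJet p (j + (k + 1))) (6 - (k + 1)) 1 y) y := by
    intro y
    rw [show 6 - k = 6 - (k + 1) + 1 by omega]
    simpa only [← add_assoc, add_right_comm _ 1 k] using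
      hasDerivAt_taylorSum (fun j => carlemanJet p (j + k)) (6 - (k + 1)) 1 y
  exact hasDerivAt_ite_le (fun y _ => hpoly y)
    (fun y hy => hasDerivAt_descPochhammer_mul_rpow p k (zero_lt_one.trans_le hy))
    (by rw [Real.one_rpow, mul_one]; exact taylorSum_carlemanJet_one p hk.le)
    (by rw [Real.one_rpow, mul_one]; exact taylorSum_carlemanJet_one p hk) x

theorem continuous_carlemanWeightDeriv (p : ℝ) {k : ℕ} (hk : k ≤ 4) :
    Continuous (carlemanWeightDeriv p k) := by
  refine continuous_if_le continuous_id continuous_const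
    (continuous_taylorSum _ _ _).continuousOn (fun x hx => ?_) (fun x hx => ?_)
  · exact (continuousAt_const.mul (Real.continuousAt_rpow_const _ _
      (Or.inl (zero_lt_one.trans_le hx).ne'))).continuousWithinAt
  · simp [hx, taylorSum_carlemanJet_one p hk]

theorem contDiff_carlemanWeightDeriv_zero (p : ℝ) : ContDiff ℝ 4 (carlemanWeightDeriv p 0) :=
  contDiff_of_hasDerivAt_succ (fun _ hk => hasDerivAt_carlemanWeightDeriv p hk)
    (continuous_carlemanWeightDeriv p le_rfl)

theorem carlemanWeightDeriv_one_zero (p : ℝ) : carlemanWeightDeriv p 1 0 = 0 := by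
  simp [carlemanWeightDeriv, taylorSum, Finset.sum_range_succ, carlemanJet,
    descPochhammer_succ_eval, Nat.factorial]
  ring

theorem carlemanWeightDeriv_two_pos {p : ℝ} (hp1 : 1 < p) (hp2 : p < 2) (x : ℝ) :
    0 < carlemanWeightDeriv p 2 x := by
  rcases le_or_gt x 1 with hx1 | hx1
  · have hform : carlemanWeightDeriv p 2 x = p * (p - 1) + p * (p - 1) * (2 - p) * (1 - x)
        + p * (p - 1) * (2 - p) * (3 - p) / 2 * (1 - x) ^ 2
        + 2 * p * (2 - p) * (3 - p) * (4 - p) / 3 * (1 - x) ^ 3 := by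
      simp [carlemanWeightDeriv, hx1, taylorSum, Finset.sum_range_succ, carlemanJet,
        descPochhammer_succ_eval, Nat.factorial]
      ring
    have hp : 0 < p := by linarith
    have ha : 0 < p * (p - 1) := mul_pos hp (by linarith)
    have hb : 0 < 2 - p := by linarith
    have hc : 0 < 3 - p := by linarith
    have hd : 0 < 4 - p := by linarith
    have ht : 0 ≤ 1 - x := by linarith
    have t1 := mul_nonneg (mul_pos ha hb).le ht
    have t2 := mul_nonneg (div_nonneg (mul_pos (mul_pos ha hb) hc).le zero_le_two)
      (sq_nonneg (1 - x))
    have t3 := mul_nonneg (div_nonneg (mul_pos (mul_pos (mul_pos (mul_pos two_pos hp) hb) hc) hd).le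
      zero_le_three) (pow_nonneg ht 3)
    rw [hform]
    linarith
  · rw [carlemanWeightDeriv_of_one_le p (by norm_num) hx1.le]
    have hpow : 0 < x ^ (p - (2 : ℕ)) := Real.rpow_pos_of_pos (by linarith) _
    have hcoef : (descPochhammer ℝ 2).eval p = p * (p - 1) := by
      simp [descPochhammer_succ_eval]
    rw [hcoef]
    exact mul_pos (mul_pos (by linarith) (by linarith)) hpow

theorem carlemanWeightDeriv_one_pos {p : ℝ} (hp1 : 1 < p) (hp2 : p < 2) {x : ℝ} (hx : 0 < x) :
    0 < carlemanWeightDeriv p 1 x := by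
  rw [← carlemanWeightDeriv_one_zero p]
  exact lt_of_hasDerivAt_pos (hasDerivAt_carlemanWeightDeriv p (by norm_num))
    (fun y _ => carlemanWeightDeriv_two_pos hp1 hp2 y) hx

noncomputable def carlemanWeight (p x : ℝ) : ℝ :=
  carlemanWeightDeriv p 0 x - carlemanWeightDeriv p 0 0

theorem carlemanWeight_of_one_le (p : ℝ) {x : ℝ} (hx : 1 ≤ x) :
    carlemanWeight p x = x ^ p - carlemanWeightDeriv p 0 0 := by
  rw [carlemanWeight, carlemanWeightDeriv_zero_of_one_le p hx]

theorem hasDerivAt_carlemanWeight (p x : ℝ) :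
    HasDerivAt (carlemanWeight p) (carlemanWeightDeriv p 1 x) x :=
  (hasDerivAt_carlemanWeightDeriv p (by norm_num) x).sub_const _

theorem carlemanWeight_pos {p : ℝ} (hp1 : 1 < p) (hp2 : p < 2) {x : ℝ} (hx : 0 < x) :
    0 < carlemanWeight p x :=
  sub_pos.2 (lt_of_hasDerivAt_pos (hasDerivAt_carlemanWeightDeriv p (by norm_num))
    (fun _ hy => carlemanWeightDeriv_one_pos hp1 hp2 hy) hx)

theorem carlemanWeight_le {p : ℝ} (hp1 : 1 < p) (hp2 : p < 2) :
    ∃ M > 0, ∀ x, 0 ≤ x → carlemanWeight p x ≤ M * x ^ p := by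
  obtain ⟨K, hK⟩ := (isCompact_Icc (a := (0 : ℝ)) (b := 1)).bddAbove_image
    (continuous_carlemanWeightDeriv p (k := 2) (by norm_num)).continuousOn
  have hK' : ∀ x ∈ Icc (0 : ℝ) 1, carlemanWeightDeriv p 2 x ≤ K :=
    fun x hx => hK (mem_image_of_mem _ hx)
  have hK0 : 0 < K :=
    (carlemanWeightDeriv_two_pos hp1 hp2 0).trans_le (hK' 0 ⟨le_rfl, zero_le_one⟩)
  have hquad := le_mul_sq_of_hasDerivAt (hasDerivAt_carlemanWeight p)
    (hasDerivAt_carlemanWeightDeriv p (by norm_num)) (sub_self _)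
    (carlemanWeightDeriv_one_zero p) hK'
  refine ⟨K / 2 + 1 + |carlemanWeightDeriv p 0 0|, by positivity, fun x hx => ?_⟩
  rcases le_or_gt x 1 with hx1 | hx1
  · have hsq : x ^ 2 ≤ x ^ p := by
      rcases hx.eq_or_lt with rfl | hx0
      · simp [Real.zero_rpow (by linarith : p ≠ 0)]
      · exact_mod_cast Real.rpow_le_rpow_of_exponent_ge hx0 hx1 hp2.le
    have : 0 ≤ (1 + |carlemanWeightDeriv p 0 0|) * x ^ p := by positivity
    nlinarith [hquad x ⟨hx, hx1⟩]
  · rw [carlemanWeight_of_one_le p hx1.le]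
    have h1 : 1 ≤ x ^ p := Real.one_le_rpow hx1.le (by linarith)
    nlinarith [neg_abs_le (carlemanWeightDeriv p 0 0),
      mul_le_mul_of_nonneg_left h1 (abs_nonneg (carlemanWeightDeriv p 0 0))]

/-- existence of the convex Carleman weight equal to `r^p + β` for `r ≥ 1`. -/
theorem statement18 (p : ℝ) (hp1 : 1 < p) (hp2 : p ≤ 4/3) :
    ∃ (β M : ℝ) (φ : ℝ → ℝ), 0 < M ∧
      -- φ is four times continuously differentiable on [0,∞)
      ContDiffOn ℝ 4 φ (Set.Ici 0) ∧
      -- φ(r) = r^p + β for r ≥ 1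
      (∀ r : ℝ, 1 ≤ r → φ r = r ^ p + β) ∧
      -- φ(0) = 0 and φ′(0) = 0 (one-sided derivative at 0)
      φ 0 = 0 ∧ derivWithin φ (Set.Ici 0) 0 = 0 ∧
      -- φ(r) > 0 and φ′(r) > 0 for r > 0
      (∀ r : ℝ, 0 < r → 0 < φ r) ∧
      (∀ r : ℝ, 0 < r → 0 < derivWithin φ (Set.Ici 0) r) ∧
      -- φ″(r) > 0 for r ≥ 0
      (∀ r : ℝ, 0 ≤ r → 0 < derivWithin (derivWithin φ (Set.Ici 0)) (Set.Ici 0) r) ∧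
      -- φ(r) ≤ M r^p for r ≥ 0
      (∀ r : ℝ, 0 ≤ r → φ r ≤ M * r ^ p) := by
  have hp_lt_two : p < 2 := by linarith
  have hφ' : ∀ r ∈ Ici (0 : ℝ),
      derivWithin (carlemanWeight p) (Ici 0) r = carlemanWeightDeriv p 1 r := fun r hr =>
    (hasDerivAt_carlemanWeight p r).hasDerivWithinAt.derivWithin (uniqueDiffOn_Ici 0 r hr)
  have hφ'' : ∀ r ∈ Ici (0 : ℝ),
      derivWithin (derivWithin (carlemanWeight p) (Ici 0)) (Ici 0) r = carlemanWeightDeriv p 2 r := by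
    intro r hr
    rw [derivWithin_congr hφ' (hφ' r hr)]
    exact (hasDerivAt_carlemanWeightDeriv p (by norm_num) r).hasDerivWithinAt.derivWithin
      (uniqueDiffOn_Ici 0 r hr)
  obtain ⟨M, hM, hle⟩ := carlemanWeight_le hp1 hp_lt_two
  refine ⟨-carlemanWeightDeriv p 0 0, M, carlemanWeight p, hM,
    ((contDiff_carlemanWeightDeriv_zero p).sub contDiff_const).contDiffOn,
    fun r hr => by rw [carlemanWeight_of_one_le p hr, sub_eq_add_neg], sub_self _, ?_,
    fun r hr => carlemanWeight_pos hp1 hp_lt_two hr, fun r hr => ?_, fun r hr => ?_, hle⟩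
  · rw [hφ' 0 self_mem_Ici]
    exact carlemanWeightDeriv_one_zero p
  · rw [hφ' r hr.le]
    exact carlemanWeightDeriv_one_pos hp1 hp_lt_two hr
  · rw [hφ'' r hr]
    exact carlemanWeightDeriv_two_pos hp1 hp_lt_two r
end
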